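/- arXiv:2501.10916 — 4 statements merged into one kernel-verified Lean document; each statement's English description precedes it below -/
import Mathlib

section
/- The generating function for the total number of hooks of length 1 in all ℓ-regular partitions of n satisfies ∑_{n≥0} b_{ℓ,1}(n) q^n = ((q^ℓ;q^ℓ)_∞/(q;q)_∞) · (q/(1-q) - q^ℓ/(1-q^ℓ)) as formal power series. -/
open PowerSeries

/-- The `i`-th largest part (0-indexed) of a partition, or `0` if `i` is too large. -/
def partAt {n : ℕ} (p : Nat.Partition n) (i : ℕ) : ℕ :=
  ((p.parts.sort (· ≤ ·)).reverse).getD i 0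

/-- The number of parts of `p` exceeding `j`, i.e. the `j`-th column length (0-indexed). -/
def colAt {n : ℕ} (p : Nat.Partition n) (j : ℕ) : ℕ :=
  (p.parts.filter (fun a => j < a)).card

/-- The number of cells in the Young diagram of `p` whose hook length equals `t`.
The cell in row `i`, column `j` (0-indexed) has hook length
`(λᵢ - 1 - j) + (λ'ⱼ - 1 - i) + 1`. -/
def hookCount {n : ℕ} (p : Nat.Partition n) (t : ℕ) : ℕ :=
  ((Finset.range n ×ˢ Finset.range n).filter
    (fun ij => ij.2 < partAt p ij.1 ∧
      (partAt p ij.1 - ij.2) + (colAt p ij.2 - ij.1) - 1 = t)).card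

/-- `bCount ℓ t n` is the total number of hooks of length `t` over all `ℓ`-regular
partitions of `n` (partitions with no part divisible by `ℓ`). -/
def bCount (ℓ t n : ℕ) : ℕ :=
  ∑ p ∈ Finset.univ.filter (fun p : Nat.Partition n => ∀ a ∈ p.parts, ¬ ℓ ∣ a),
    hookCount p t

noncomputable instance : TopologicalSpace (PowerSeries ℚ) :=
  inferInstanceAs (TopologicalSpace ((Unit →₀ ℕ) → ℚ))

/-!
A hook of length one is a cell ending both its row and its column, i.e. the last cell of the
last row of each length, so a partition has exactly one such hook per distinct part size.
Hence `b_{ℓ,1}(n) = ∑_{k ≥ 1, ℓ ∤ k} #{ℓ-regular λ ⊢ n with k ∈ λ}`, and deleting one part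
`k` identifies the latter set with the `ℓ`-regular partitions of `n - k`. The generating
function is therefore the product of `∑_{k ≥ 1, ℓ ∤ k} q^k = q/(1-q) - q^ℓ/(1-q^ℓ)` with the
generating function of `ℓ`-regular partitions, which is `(q^ℓ;q^ℓ)_∞/(q;q)_∞` because
multiplying `∏_{ℓ ∤ i} 1/(1-q^i)` by `(q;q)_∞` leaves exactly the factors `1 - q^i`, `ℓ ∣ i`.
-/

open Finset Nat.Partition

section Conjugate

lemma lt_getD_iff_lt_length_filter {l : List ℕ} (hl : l.Pairwise (· ≥ ·)) (i j : ℕ) :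
    j < l.getD i 0 ↔ i < (l.filter (j < ·)).length := by
  induction l generalizing i with
  | nil => simp
  | cons a t ih =>
    obtain ⟨ha, ht⟩ := List.pairwise_cons.1 hl
    by_cases hja : j < a
    · rw [List.filter_cons_of_pos (by simpa using hja)]
      cases i with
      | zero => simpa using hja
      | succ i => simpa using ih ht i
    · have hle : ∀ b ∈ a :: t, b ≤ j := by
        simp only [List.mem_cons, forall_eq_or_imp]
        exact ⟨by omega, fun b hb => (ha b hb).trans (by omega)⟩
      rw [List.filter_eq_nil_iff.2 (by simpa using hle)]
      rcases lt_or_ge i (a :: t).length with hi | hi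
      · rw [List.getD_eq_getElem _ _ hi]
        simpa using hle _ (List.getElem_mem hi)
      · rw [List.getD_eq_default _ _ hi]
        simp

variable {n : ℕ} (p : Nat.Partition n)

lemma lt_partAt_iff (i j : ℕ) : j < partAt p i ↔ i < colAt p j := by
  have hsorted : ((p.parts.sort (· ≤ ·)).reverse).Pairwise (· ≥ ·) := by
    simp [List.pairwise_reverse, p.parts.pairwise_sort]
  rw [partAt, lt_getD_iff_lt_length_filter hsorted, colAt, List.filter_reverse,
    List.length_reverse, ← Multiset.coe_card, ← Multiset.filter_coe, Multiset.sort_eq]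

lemma partAt_mem_parts {i : ℕ} (h : 0 < partAt p i) : partAt p i ∈ p.parts := by
  rw [partAt] at h ⊢
  rcases lt_or_ge i (p.parts.sort (· ≤ ·)).reverse.length with hi | hi
  · rw [List.getD_eq_getElem _ _ hi, ← Multiset.mem_sort (· ≤ ·), ← List.mem_reverse]
    exact List.getElem_mem hi
  · rw [List.getD_eq_default _ _ hi] at h
    omega

lemma colAt_lt_colAt {v j : ℕ} (hv : v ∈ p.parts) (hj : j < v) : colAt p v < colAt p j := by
  refine Multiset.card_lt_card (lt_of_le_of_ne ?_ fun h => ?_)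
  · exact Multiset.monotone_filter_right _ fun a (ha : v < a) => hj.trans ha
  · have hmem : v ∈ p.parts.filter (j < ·) := Multiset.mem_filter.2 ⟨hv, hj⟩
    rw [← h, Multiset.mem_filter] at hmem
    exact lt_irrefl v hmem.2

lemma card_parts_le : Multiset.card p.parts ≤ n := by
  simpa [p.parts_sum] using Multiset.card_nsmul_le_sum (fun a ha => p.parts_pos ha)

lemma colAt_le (j : ℕ) : colAt p j ≤ n :=
  (Multiset.card_le_card (Multiset.filter_le _ _)).trans (card_parts_le p)

lemma hook_eq_one_iff (i j : ℕ) :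
    (j < partAt p i ∧ (partAt p i - j) + (colAt p j - i) - 1 = 1) ↔
      partAt p i = j + 1 ∧ colAt p j = i + 1 := by
  have hconj := lt_partAt_iff p i j
  omega

lemma partAt_colAt_pred_sub_one {v : ℕ} (hv : v ∈ p.parts) :
    0 < colAt p (v - 1) ∧ partAt p (colAt p (v - 1) - 1) = v := by
  have hv0 := p.parts_pos hv
  have hcol : 0 < colAt p (v - 1) :=
    Multiset.card_pos_iff_exists_mem.2 ⟨v, Multiset.mem_filter.2 ⟨hv, by omega⟩⟩
  have hgt := (lt_partAt_iff p (colAt p (v - 1) - 1) (v - 1)).2 (by omega)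
  have hlt := colAt_lt_colAt p hv (j := v - 1) (by omega)
  have hle := (lt_partAt_iff p (colAt p (v - 1) - 1) v).not.2 (by omega)
  omega

theorem hookCount_one : hookCount p 1 = p.parts.toFinset.card := by
  refine Finset.card_nbij' (fun ij => ij.2 + 1) (fun v => (colAt p (v - 1) - 1, v - 1))
    ?_ ?_ ?_ ?_
  · rintro ⟨i, j⟩ h
    simp only [coe_filter, Set.mem_ofPred_eq, hook_eq_one_iff] at h
    show j + 1 ∈ p.parts.toFinset
    rw [Multiset.mem_toFinset, ← h.2.1]
    exact partAt_mem_parts p (by omega)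
  · intro v hv
    rw [mem_coe, Multiset.mem_toFinset] at hv
    have hcorner := partAt_colAt_pred_sub_one p hv
    have hvn := le_of_mem_parts hv
    have hcol := colAt_le p (v - 1)
    have hv0 := p.parts_pos hv
    simp only [coe_filter, Set.mem_ofPred_eq, hook_eq_one_iff, mem_product, mem_range]
    omega
  · rintro ⟨i, j⟩ h
    simp only [coe_filter, Set.mem_ofPred_eq, hook_eq_one_iff] at h
    simp only [Nat.add_sub_cancel, h.2.2]
  · intro v hv
    rw [mem_coe, Multiset.mem_toFinset] at hv
    have hv0 := p.parts_pos hv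
    show v - 1 + 1 = v
    omega

end Conjugate

section Restricted

variable (S : ℕ → Prop) [DecidablePred S]

lemma card_restricted_filter_mem {n k : ℕ} (hS : S k) (hk : 1 ≤ k) (hkn : k ≤ n) :
    #{p ∈ restricted n S | k ∈ p.parts} = #(restricted (n - k) S) := by
  let e := partitionWithPartEquiv hk hkn
  refine Finset.card_bij' (fun p hp => e ⟨p, (mem_filter.1 hp).2⟩) (fun q _ => (e.symm q).1)
    ?_ ?_ ?_ ?_
  · intro p hp
    simp only [restricted, mem_filter, mem_univ, true_and] at hp ⊢
    simpa [e] using fun a ha => hp.1 a (Multiset.mem_of_mem_erase ha)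
  · intro q hq
    simp only [restricted, mem_filter, mem_univ, true_and] at hq ⊢
    refine ⟨?_, (e.symm q).2⟩
    simpa [e, hS] using hq
  · intro p hp
    simp
  · intro q hq
    simp

theorem sum_card_toFinset_parts_restricted (n : ℕ) :
    ∑ p ∈ restricted n S, #p.parts.toFinset =
      ∑ k ∈ range (n + 1), if k ≠ 0 ∧ S k then #(restricted (n - k) S) else 0 := by
  have hparts (p : n.Partition) : p.parts.toFinset = {k ∈ range (n + 1) | k ∈ p.parts} := by
    ext k
    simpa using fun hk => Nat.lt_succ_of_le (le_of_mem_parts hk)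
  simp_rw [hparts, card_filter]
  rw [sum_comm]
  refine sum_congr rfl fun k hk => ?_
  rw [← card_filter]
  split_ifs with h
  · exact card_restricted_filter_mem S h.2 (Nat.one_le_iff_ne_zero.2 h.1)
      (Nat.lt_succ_iff.1 (mem_range.1 hk))
  · refine card_eq_zero.2 (filter_eq_empty_iff.2 fun p hp hk => h ⟨?_, ?_⟩)
    · exact (p.parts_pos hk).ne'
    · exact (mem_filter.1 hp).2 k hk

theorem powerSeriesMk_sum_card_toFinset_parts_restricted (R : Type*) [CommSemiring R] :
    PowerSeries.mk (fun n => ((∑ p ∈ restricted n S, #p.parts.toFinset : ℕ) : R)) =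
      PowerSeries.mk (fun n => (#(restricted n S) : R)) *
        PowerSeries.mk (fun k => if k ≠ 0 ∧ S k then 1 else 0) := by
  ext n
  rw [coeff_mk, mul_comm, coeff_mul, Nat.sum_antidiagonal_eq_sum_range_succ_mk,
    sum_card_toFinset_parts_restricted]
  push_cast
  refine sum_congr rfl fun k _ => ?_
  simp only [coeff_mk]
  split_ifs <;> simp

end Restricted

section ProdOneSubXPow

open PowerSeries.WithPiTopology

variable (R : Type*) [CommRing R] [TopologicalSpace R] [T2Space R]

lemma constantCoeff_tprod_one_sub_X_pow :
    constantCoeff (∏' i, (1 - X ^ (i + 1)) : R⟦X⟧) = 1 := by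
  simp [(multipliable_one_sub_X_pow R).map_tprod _ (continuous_constantCoeff R)]

theorem powerSeriesMk_card_restricted_not_dvd_mul_tprod [IsTopologicalRing R] {ℓ : ℕ}
    (hℓ : 0 < ℓ) :
    PowerSeries.mk (fun n => (#(restricted n (¬ ℓ ∣ ·)) : R)) * ∏' i, (1 - X ^ (i + 1)) =
      ∏' i, (1 - X ^ (ℓ * (i + 1))) := by
  have hfactor (i : ℕ) :
      (if ¬ ℓ ∣ i + 1 then ∑' j, (X : R⟦X⟧) ^ ((i + 1) * j) else 1) * (1 - X ^ (i + 1)) =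
        if ℓ ∣ i + 1 then 1 - X ^ (i + 1) else 1 := by
    split_ifs
    · simp
    · simp [pow_mul, tsum_pow_mul_one_sub_of_constantCoeff_eq_zero]
  have hprod := (hasProd_powerSeriesMk_card_restricted R (¬ ℓ ∣ ·)).mul
    (multipliable_one_sub_X_pow R).hasProd
  simp only [hfactor] at hprod
  rw [← hprod.tprod_eq]
  have hinj : Function.Injective fun j => ℓ * (j + 1) - 1 := fun a b h => by
    simpa using Nat.eq_of_mul_eq_mul_left hℓ
      (Nat.sub_one_cancel (Nat.mul_pos hℓ a.succ_pos) (Nat.mul_pos hℓ b.succ_pos) h)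
  rw [← hinj.tprod_eq]
  · refine tprod_congr fun j => ?_
    have hsucc : ℓ * (j + 1) - 1 + 1 = ℓ * (j + 1) :=
      Nat.sub_add_cancel (Nat.mul_pos hℓ j.succ_pos)
    simp [hsucc]
  · intro i hi
    obtain ⟨c, hc⟩ : ℓ ∣ i + 1 := by
      by_contra h
      exact hi (if_neg h)
    exact ⟨c - 1, by cases c <;> simp_all; omega⟩

end ProdOneSubXPow

lemma X_pow_mul_inv_one_sub_X_pow {K : Type*} [Field K] {m : ℕ} (hm : 0 < m) :
    (X : K⟦X⟧) ^ m * (1 - X ^ m)⁻¹ =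
      PowerSeries.mk fun n => if m ∣ n ∧ n ≠ 0 then 1 else 0 := by
  refine ((eq_mul_inv_iff_mul_eq (by simp [hm.ne'])).2 ?_).symm
  ext n
  rw [mul_sub, mul_one, map_sub, coeff_mul_X_pow', coeff_X_pow, coeff_mk]
  obtain hlt | rfl | hgt := lt_trichotomy n m
  · have hndvd : ¬ (m ∣ n ∧ n ≠ 0) := fun h =>
      hlt.not_ge (Nat.le_of_dvd (Nat.pos_of_ne_zero h.2) h.1)
    simp [hndvd, hlt.not_ge, hlt.ne]
  · simp [hm.ne']
  · obtain ⟨k, rfl⟩ := Nat.exists_eq_add_of_lt hgt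
    simp [add_assoc, Nat.dvd_add_self_left]

theorem bCount_one_generating_function (ℓ : ℕ) (hℓ : 2 ≤ ℓ) :
    (PowerSeries.mk fun n => (bCount ℓ 1 n : ℚ)) =
      (∏' j : ℕ, (1 - (X : ℚ⟦X⟧) ^ (ℓ * (j + 1)))) *
        (∏' j : ℕ, (1 - (X : ℚ⟦X⟧) ^ (j + 1)))⁻¹ *
        (X * (1 - (X : ℚ⟦X⟧))⁻¹ - X ^ ℓ * (1 - (X : ℚ⟦X⟧) ^ ℓ)⁻¹) := by
  have hbCount (n : ℕ) : bCount ℓ 1 n = ∑ p ∈ restricted n (¬ ℓ ∣ ·), #p.parts.toFinset :=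
    sum_congr rfl fun p _ => hookCount_one p
  -- The lemmas above use Mathlib's scoped pi topology on power series, which is only
  -- definitionally (not syntactically) the instance on `ℚ⟦X⟧` fixed above; hence no `rw`.
  have hregular : PowerSeries.mk (fun n => (#(restricted n (¬ ℓ ∣ ·)) : ℚ)) =
      (∏' j : ℕ, (1 - (X : ℚ⟦X⟧) ^ (ℓ * (j + 1)))) *
        (∏' j : ℕ, (1 - (X : ℚ⟦X⟧) ^ (j + 1)))⁻¹ :=
    (eq_mul_inv_iff_mul_eq ((constantCoeff_tprod_one_sub_X_pow ℚ).trans_ne one_ne_zero)).2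
      (powerSeriesMk_card_restricted_not_dvd_mul_tprod ℚ (by omega))
  have hallowedParts : X * (1 - (X : ℚ⟦X⟧))⁻¹ - X ^ ℓ * (1 - (X : ℚ⟦X⟧) ^ ℓ)⁻¹ =
      PowerSeries.mk fun k => if k ≠ 0 ∧ ¬ ℓ ∣ k then 1 else 0 := by
    have hX := X_pow_mul_inv_one_sub_X_pow (K := ℚ) one_pos
    rw [pow_one] at hX
    rw [hX, X_pow_mul_inv_one_sub_X_pow (by omega)]
    ext k
    by_cases hk : k = 0 <;> by_cases hℓk : ℓ ∣ k <;> simp [hk, hℓk]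
  simp_rw [hbCount, ← hregular, hallowedParts, powerSeriesMk_sum_card_toFinset_parts_restricted]
end

section
/- For every integer ℓ ≥ 2 and every n ≥ 0, the number of ℓ-regular partitions of n equals the number of ℓ-distinct partitions of n. -/
theorem glaisher (ℓ : ℕ) (hℓ : 2 ≤ ℓ) (n : ℕ) :
    (Finset.univ.filter (fun p : Nat.Partition n => ∀ a ∈ p.parts, ¬ ℓ ∣ a)).card =
      (Finset.univ.filter
        (fun p : Nat.Partition n => ∀ a ∈ p.parts, p.parts.count a < ℓ)).card :=
  Nat.Partition.card_restricted_eq_card_countRestricted n (by omega)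
end

section
/- The function g₂(x) := 3/2 - γ - ψ(x+1) - 2x(ψ(2x) - ψ(x)) is strictly decreasing on the interval (0,1), where ψ is the digamma function and γ is the Euler–Mascheroni constant. -/
/-! Differentiating the logarithm of Euler's limit formula
`Γ(x) = lim n^x n! / (x (x+1) ⋯ (x+n))` term by term (the derivatives converge locally
uniformly) gives `ψ(x) = -γ + ∑ₖ (1/(k+1) - 1/(x+k))` for `x > 0`. Hence
`g₂(x) = 3/2 - ∑ₖ [(1/(k+1) - 1/(x+1+k)) + 2x²/((x+k)(2x+k))]`. In each summand the first
part is strictly increasing in `x > 0` and the second is nondecreasing, so `g₂` is strictly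
decreasing on all of `(0, ∞)`. -/

/-- The digamma function `ψ(x) = Γ'(x)/Γ(x)`. -/
noncomputable def digamma (x : ℝ) : ℝ := deriv Real.Gamma x / Real.Gamma x

/-- `g₂(x) = 3/2 - γ - ψ(x+1) - 2x(ψ(2x) - ψ(x))`. -/
noncomputable def g2 (x : ℝ) : ℝ :=
  3 / 2 - Real.eulerMascheroniConstant - digamma (x + 1)
    - 2 * x * (digamma (2 * x) - digamma x)

/-- `g₃(x) = 2 - γ - ψ(x+1) + (x/2)(5-3x)ψ(x) - x(1-6x)ψ(2x) - (3x/2)(1+3x)ψ(3x)`. -/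
noncomputable def g3 (x : ℝ) : ℝ :=
  2 - Real.eulerMascheroniConstant - digamma (x + 1)
    + x / 2 * (5 - 3 * x) * digamma x
    - x * (1 - 6 * x) * digamma (2 * x)
    - 3 * x / 2 * (1 + 3 * x) * digamma (3 * x)

/-- `β₁(ℓ) = (1/ℓ)(-γ - ψ(1/ℓ))`. -/
noncomputable def beta1 (l : ℝ) : ℝ :=
  1 / l * (-Real.eulerMascheroniConstant - digamma (1 / l))

/-- `β₂(ℓ) = (1/ℓ)[1 - γ - (1 - 2/ℓ)ψ(1/ℓ) - (2/ℓ)ψ(2/ℓ)]`. -/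
noncomputable def beta2 (l : ℝ) : ℝ :=
  1 / l * (1 - Real.eulerMascheroniConstant - (1 - 2 / l) * digamma (1 / l)
    - 2 / l * digamma (2 / l))

/-- `β₃(ℓ) = (1/ℓ)[3/2 - γ - (1 - 3/(2ℓ))(1 - 1/ℓ)ψ(1/ℓ) - (1/ℓ)(1 - 6/ℓ)ψ(2/ℓ)
  - (3/(2ℓ))(1 + 3/ℓ)ψ(3/ℓ)]`. -/
noncomputable def beta3 (l : ℝ) : ℝ :=
  1 / l * (3 / 2 - Real.eulerMascheroniConstant
    - (1 - 3 / (2 * l)) * (1 - 1 / l) * digamma (1 / l)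
    - 1 / l * (1 - 6 / l) * digamma (2 / l)
    - 3 / (2 * l) * (1 + 3 / l) * digamma (3 / l))

open Real Filter Topology Set Finset

noncomputable def digammaTerm (x : ℝ) (k : ℕ) : ℝ := 1 / ((k : ℝ) + 1) - 1 / (x + k)

lemma digammaTerm_lt_digammaTerm {x y : ℝ} (hx : 0 < x) (hxy : x < y) (k : ℕ) :
    digammaTerm x k < digammaTerm y k := by
  unfold digammaTerm
  gcongr

lemma digammaTerm_le_digammaTerm {x y : ℝ} (hx : 0 < x) (hxy : x ≤ y) (k : ℕ) :
    digammaTerm x k ≤ digammaTerm y k := by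
  unfold digammaTerm
  gcongr

lemma abs_digammaTerm_le {y : ℝ} (hy : 0 < y) (k : ℕ) :
    |digammaTerm y k| ≤ |y - 1| / min y 1 * (1 / ((k : ℝ) + 1) ^ 2) := by
  have hmin : 0 < min y 1 := lt_min hy one_pos
  have hyk : min y 1 * ((k : ℝ) + 1) ≤ y + k := by
    nlinarith [min_le_left y 1, min_le_right y 1, k.cast_nonneg (α := ℝ)]
  have heq : digammaTerm y k = (y - 1) / (((k : ℝ) + 1) * (y + k)) := by
    unfold digammaTerm
    field_simp
    ring
  have hden : 0 < ((k : ℝ) + 1) * (y + k) := by positivity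
  rw [heq, abs_div, abs_of_pos hden, div_mul_div_comm, mul_one]
  refine div_le_div_of_nonneg_left (abs_nonneg _) (by positivity) ?_
  calc min y 1 * ((k : ℝ) + 1) ^ 2 = ((k : ℝ) + 1) * (min y 1 * ((k : ℝ) + 1)) := by ring
    _ ≤ ((k : ℝ) + 1) * (y + k) := by gcongr

lemma summable_digammaTerm {y : ℝ} (hy : 0 < y) : Summable (digammaTerm y) := by
  have hsq : Summable fun k : ℕ => 1 / ((k : ℝ) + 1) ^ 2 := by
    simpa using (summable_nat_add_iff 1).mpr (summable_one_div_nat_pow.mpr one_lt_two)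
  exact .of_norm_bounded (hsq.mul_left _) (abs_digammaTerm_le hy)

lemma tendstoUniformlyOn_sum_range_digammaTerm {a b : ℝ} (ha : 0 < a) (hab : a ≤ b) :
    TendstoUniformlyOn (fun n y => ∑ k ∈ range n, digammaTerm y k)
      (fun y => ∑' k, digammaTerm y k) atTop (Set.Icc a b) := by
  refine tendstoUniformlyOn_tsum_nat ((summable_digammaTerm ha).abs.add
    (summable_digammaTerm (ha.trans_le hab)).abs) fun k y hy => ?_
  -- each term is monotone in `y`, so it is squeezed between its values at `a` and `b`
  have hay := digammaTerm_le_digammaTerm ha hy.1 k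
  have hyb := digammaTerm_le_digammaTerm (ha.trans_le hy.1) hy.2 k
  rw [Real.norm_eq_abs, abs_le]
  constructor <;> linarith [neg_abs_le (digammaTerm a k), le_abs_self (digammaTerm b k),
    abs_nonneg (digammaTerm a k), abs_nonneg (digammaTerm b k)]

lemma sum_range_digammaTerm (y : ℝ) (n : ℕ) :
    ∑ k ∈ range n, digammaTerm y k = harmonic n - ∑ k ∈ range n, 1 / (y + k) := by
  simp only [digammaTerm, sum_sub_distrib, harmonic]
  push_cast
  simp [one_div]

lemma tendsto_harmonic_succ_sub_log :
    Tendsto (fun n : ℕ => (harmonic (n + 1) : ℝ) - log n) atTop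
      (𝓝 eulerMascheroniConstant) := by
  have h := tendsto_harmonic_sub_log.add tendsto_one_div_add_atTop_nhds_zero_nat
  rw [add_zero] at h
  refine h.congr fun n => ?_
  rw [harmonic_succ]
  push_cast
  ring

lemma hasDerivAt_logGammaSeq {y : ℝ} (hy : 0 < y) (n : ℕ) :
    HasDerivAt (BohrMollerup.logGammaSeq · n)
      (log n - ∑ k ∈ range (n + 1), 1 / (y + k)) y := by
  have hsum : HasDerivAt (fun y => ∑ k ∈ range (n + 1), log (y + k))
      (∑ k ∈ range (n + 1), 1 / (y + k)) y :=
    HasDerivAt.fun_sum fun k _ => by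
      simpa using ((hasDerivAt_id y).add_const (k : ℝ)).log (by positivity)
  simpa [BohrMollerup.logGammaSeq] using
    ((hasDerivAt_mul_const (log n)).add_const (log (n.factorial : ℝ))).fun_sub hsum

lemma tendstoUniformlyOn_log_sub_sum_range_inv {a b : ℝ} (ha : 0 < a) (hab : a ≤ b) :
    TendstoUniformlyOn (fun (n : ℕ) (y : ℝ) => log n - ∑ k ∈ range (n + 1), 1 / (y + k))
      (fun y => -eulerMascheroniConstant + ∑' k, digammaTerm y k) atTop (Set.Icc a b) := by
  have hsum := tendstoUniformlyOn_sum_range_digammaTerm ha hab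
  have hsum' : TendstoUniformlyOn (fun n y => ∑ k ∈ range (n + 1), digammaTerm y k)
      (fun y => ∑' k, digammaTerm y k) atTop (Set.Icc a b) :=
    fun u hu => (tendsto_add_atTop_nat 1).eventually (hsum u hu)
  refine ((tendsto_harmonic_succ_sub_log.neg.tendstoUniformlyOn_const _).add hsum').congr
    (.of_forall fun n y _ => ?_)
  simp only [Pi.add_apply, sum_range_digammaTerm]
  ring

theorem hasDerivAt_log_Gamma {x : ℝ} (hx : 0 < x) :
    HasDerivAt (fun y => log (Gamma y))
      (-eulerMascheroniConstant + ∑' k, digammaTerm x k) x := by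
  have hxs : x ∈ Ioo (x / 2) (2 * x) := ⟨by linarith, by linarith⟩
  have hpos : ∀ y ∈ Ioo (x / 2) (2 * x), 0 < y := fun y hy => (half_pos hx).trans hy.1
  exact hasDerivAt_of_tendstoUniformlyOn (l := atTop)
    (g' := fun y => -eulerMascheroniConstant + ∑' k, digammaTerm y k) isOpen_Ioo
    ((tendstoUniformlyOn_log_sub_sum_range_inv (half_pos hx) (by linarith : x / 2 ≤ 2 * x)).mono
      Ioo_subset_Icc_self)
    (.of_forall fun n y hy => hasDerivAt_logGammaSeq (hpos y hy) n)
    (fun y hy => BohrMollerup.tendsto_log_gamma (hpos y hy)) hxs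

theorem digamma_eq_tsum {x : ℝ} (hx : 0 < x) :
    digamma x = -eulerMascheroniConstant + ∑' k, digammaTerm x k := by
  have hΓ : DifferentiableAt ℝ Gamma x :=
    differentiableAt_Gamma fun m => by linarith [(m.cast_nonneg : (0 : ℝ) ≤ m)]
  rw [digamma, (hΓ.hasDerivAt.log (Gamma_pos_of_pos hx).ne').unique (hasDerivAt_log_Gamma hx)]

noncomputable def g2Term (x : ℝ) (k : ℕ) : ℝ :=
  digammaTerm (x + 1) k + 2 * x * (digammaTerm (2 * x) k - digammaTerm x k)

lemma summable_g2Term {x : ℝ} (hx : 0 < x) : Summable (g2Term x) :=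
  (summable_digammaTerm (by linarith)).add
    (((summable_digammaTerm (by linarith)).sub (summable_digammaTerm hx)).mul_left _)

lemma g2_eq_tsum {x : ℝ} (hx : 0 < x) : g2 x = 3 / 2 - ∑' k, g2Term x k := by
  have h2x := summable_digammaTerm (by linarith : 0 < 2 * x)
  have hx' := summable_digammaTerm hx
  simp only [g2, g2Term]
  rw [digamma_eq_tsum (by linarith), digamma_eq_tsum (by linarith), digamma_eq_tsum hx,
    (summable_digammaTerm (by linarith)).tsum_add ((h2x.sub hx').mul_left _), tsum_mul_left,
    h2x.tsum_sub hx']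
  ring

lemma two_mul_mul_digammaTerm_sub_le {x y : ℝ} (hx : 0 < x) (hxy : x ≤ y) (k : ℕ) :
    2 * x * (digammaTerm (2 * x) k - digammaTerm x k)
      ≤ 2 * y * (digammaTerm (2 * y) k - digammaTerm y k) := by
  have hy : 0 < y := hx.trans_le hxy
  have key : ∀ z : ℝ, 0 < z →
      2 * z * (digammaTerm (2 * z) k - digammaTerm z k) = 2 * z ^ 2 / ((z + k) * (2 * z + k)) := by
    intro z hz
    unfold digammaTerm
    field_simp
    ring
  rw [key x hx, key y hy, div_le_div_iff₀ (by positivity) (by positivity)]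
  have hk : (0 : ℝ) ≤ k := k.cast_nonneg
  have hxy' : 0 ≤ y - x := sub_nonneg.mpr hxy
  nlinarith [mul_nonneg (mul_nonneg hk (mul_pos hx hy).le) hxy',
    mul_nonneg (mul_nonneg hk hk) (mul_nonneg hxy' (by linarith : (0 : ℝ) ≤ x + y))]

lemma g2Term_strictMonoOn (k : ℕ) : StrictMonoOn (g2Term · k) (Ioi 0) := by
  intro x (hx : 0 < x) y _ hxy
  exact add_lt_add_of_lt_of_le (digammaTerm_lt_digammaTerm (by linarith) (by linarith) k)
    (two_mul_mul_digammaTerm_sub_le hx hxy.le k)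

theorem g2_strictAntiOn_Ioi : StrictAntiOn g2 (Ioi 0) := fun x hx y hy hxy => by
  rw [g2_eq_tsum hx, g2_eq_tsum hy]
  have hterm (k : ℕ) : g2Term x k < g2Term y k := g2Term_strictMonoOn k hx hy hxy
  linarith [(summable_g2Term hx).tsum_lt_tsum (fun k => (hterm k).le) (hterm 0)
    (summable_g2Term hy)]

theorem g2_strictAntiOn : StrictAntiOn g2 (Set.Ioo (0 : ℝ) 1) :=
  g2_strictAntiOn_Ioi.mono Ioo_subset_Ioi_self
end

section
/- The function g₃(x) := 2 - γ - ψ(x+1) + (x/2)(5-3x)ψ(x) - x(1-6x)ψ(2x) - (3x/2)(1+3x)ψ(3x) is strictly decreasing on the interval (0,1), where ψ is the digamma function and γ is the Euler–Mascheroni constant. -/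
/-!
By Gauss's formula `ψ(y) = lim (log n - ∑_{k<n} 1/(y+k))`, which follows from
`ψ(y+n) = ψ(y) + ∑_{k<n} 1/(y+k)` and the bounds `log y ≤ ψ(y+1) ≤ log (y+1)` given by the
convexity of `log Γ`, together with `ψ(x+1) = ψ(x) + 1/x`, we get
`g₃(x) = lim (1/2 - γ - log (n+1) + ∑_{k=1}^{n} g3Term k x)`: the coefficients of `log n` cancel
because `(x/2)(5-3x) - x(1-6x) - (3x/2)(1+3x) = 0`. Each `g3Term k` is a rational function whose
derivative is minus a polynomial with nonnegative coefficients over a square, so it is strictly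
decreasing on `(0, ∞)`, and therefore so is `g₃`.
-/

open Filter Topology Set Finset Real

lemma hasDerivAt_log_Gamma_s6 {x : ℝ} (hx : ∀ m : ℕ, x ≠ -m) :
    HasDerivAt (fun y => log (Gamma y)) (digamma x) x :=
  (differentiableAt_Gamma hx).hasDerivAt.log (Gamma_ne_zero hx)

lemma hasDerivAt_log_Gamma_of_pos {x : ℝ} (hx : 0 < x) :
    HasDerivAt (fun y => log (Gamma y)) (digamma x) x :=
  hasDerivAt_log_Gamma_s6 fun m => ((neg_nonpos.mpr m.cast_nonneg).trans_lt hx).ne'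

lemma digamma_add_one {x : ℝ} (hx : 0 < x) : digamma (x + 1) = digamma x + x⁻¹ := by
  have hshift : HasDerivAt (fun y => log (Gamma (y + 1))) (digamma (x + 1)) x :=
    (hasDerivAt_log_Gamma_of_pos (by linarith)).comp_add_const x 1
  refine hshift.unique
    (((hasDerivAt_log_Gamma_of_pos hx).add (hasDerivAt_log hx.ne')).congr_of_eventuallyEq ?_)
  filter_upwards [eventually_gt_nhds hx] with y hy
  rw [Pi.add_apply, Gamma_add_one hy.ne', log_mul hy.ne' (Gamma_pos_of_pos hy).ne', add_comm]

lemma digamma_add_nat {x : ℝ} (hx : 0 < x) (n : ℕ) :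
    digamma (x + n) = digamma x + ∑ k ∈ range n, (x + k)⁻¹ := by
  induction n with
  | zero => simp
  | succ n ih =>
    rw [Nat.cast_succ, ← add_assoc, digamma_add_one (by positivity), ih, sum_range_succ, add_assoc]

lemma digamma_add_one_mem_Icc {x : ℝ} (hx : 0 < x) :
    digamma (x + 1) ∈ Icc (log x) (log (x + 1)) := by
  have hslope (y : ℝ) (hy : 0 < y) : slope (log ∘ Gamma) y (y + 1) = log y := by
    rw [slope_def_field, add_sub_cancel_left, div_one, Function.comp_apply, Function.comp_apply,
      Gamma_add_one hy.ne', log_mul hy.ne' (Gamma_pos_of_pos hy).ne', add_sub_cancel_right]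
  have hd := hasDerivAt_log_Gamma_of_pos (x := x + 1) (by positivity)
  constructor
  · rw [← hslope x hx]
    exact convexOn_log_Gamma.slope_le_of_hasDerivAt hx (by simp; linarith) (by linarith) hd
  · rw [← hslope (x + 1) (by positivity)]
    exact convexOn_log_Gamma.le_slope_of_hasDerivAt (by simp; linarith) (by simp; linarith)
      (by linarith) hd

lemma tendsto_digamma_sub_log : Tendsto (fun y => digamma y - log y) atTop (𝓝 0) := by
  have hbounds (y : ℝ) (hy : 1 < y) : digamma y ∈ Icc (log (y + -1)) (log y) := by
    rw [← sub_eq_add_neg]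
    simpa using digamma_add_one_mem_Icc (sub_pos.2 hy)
  refine tendsto_of_tendsto_of_tendsto_of_le_of_le' (tendsto_log_comp_add_sub_log (-1))
    tendsto_const_nhds ?_ ?_
  · filter_upwards [eventually_gt_atTop 1] with y hy
    linarith [(hbounds y hy).1]
  · filter_upwards [eventually_gt_atTop 1] with y hy
    linarith [(hbounds y hy).2]

theorem tendsto_log_sub_sum_digamma {x : ℝ} (hx : 0 < x) :
    Tendsto (fun n : ℕ => log n - ∑ k ∈ range n, (x + k)⁻¹) atTop (𝓝 (digamma x)) := by
  have hdig := tendsto_digamma_sub_log.comp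
    (tendsto_atTop_add_const_left _ x tendsto_natCast_atTop_atTop)
  have hlog := (tendsto_log_comp_add_sub_log x).comp tendsto_natCast_atTop_atTop
  convert (tendsto_const_nhds (x := digamma x)).sub (hdig.add hlog) using 1
  · ext n
    simp only [Function.comp_apply, digamma_add_nat hx, add_comm (n : ℝ) x]
    ring
  · simp

theorem strictAntiOn_of_tendsto_add_sum {α : Type*} [Preorder α] {s : Set α} {f : ℕ → α → ℝ}
    {c : ℕ → ℝ} {g : α → ℝ} (hf : ∀ k, StrictAntiOn (f k) s)
    (hg : ∀ x ∈ s, Tendsto (fun n => c n + ∑ k ∈ range n, f k x) atTop (𝓝 (g x))) :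
    StrictAntiOn g s := by
  intro x hx y hy hxy
  set d : ℕ → ℝ := fun n => ∑ k ∈ range n, (f k y - f k x)
  have hd : Tendsto d atTop (𝓝 (g y - g x)) := by
    refine ((hg y hy).sub (hg x hx)).congr fun n => ?_
    simp only [d, sum_sub_distrib]
    ring
  have hanti : Antitone d := antitone_nat_of_succ_le fun n => by
    simp only [d, sum_range_succ]
    linarith [hf n hx hy hxy]
  have hle := hanti.le_of_tendsto hd 1
  simp only [d, sum_range_one] at hle
  linarith [hf 0 hx hy hxy]

noncomputable def g3Term (k : ℕ) (x : ℝ) : ℝ :=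
  (1 - x / 2 * (5 - 3 * x)) / (x + k) + x * (1 - 6 * x) / (2 * x + k)
    + 3 * x / 2 * (1 + 3 * x) / (3 * x + k)

lemma g3Term_zero {x : ℝ} (hx : x ≠ 0) : g3Term 0 x = x⁻¹ - 3 / 2 := by
  simp only [g3Term, Nat.cast_zero, add_zero]
  field_simp
  ring

lemma sum_g3Term (x : ℝ) (n : ℕ) :
    ∑ k ∈ range n, g3Term k x = (1 - x / 2 * (5 - 3 * x)) * ∑ k ∈ range n, (x + k)⁻¹
      + x * (1 - 6 * x) * ∑ k ∈ range n, (2 * x + k)⁻¹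
      + 3 * x / 2 * (1 + 3 * x) * ∑ k ∈ range n, (3 * x + k)⁻¹ := by
  simp only [g3Term, div_eq_mul_inv, sum_add_distrib, mul_sum]

lemma hasDerivAt_g3Term (k : ℕ) {x : ℝ} (hx : 0 < x) :
    HasDerivAt (g3Term k)
      (-(k ^ 4 + 8 * k ^ 4 * x + 9 * k ^ 4 * x ^ 2 + 10 * k ^ 3 * x + 51 * k ^ 3 * x ^ 2
          + 36 * k ^ 3 * x ^ 3 + 37 * k ^ 2 * x ^ 2 + 108 * k ^ 2 * x ^ 3 + 33 * k ^ 2 * x ^ 4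
          + 60 * k * x ^ 3 + 75 * k * x ^ 4 + 36 * x ^ 4)
        / ((x + k) ^ 2 * (2 * x + k) ^ 2 * (3 * x + k) ^ 2)) x := by
  have hid := hasDerivAt_id x
  have h1 := ((hasDerivAt_const x (1 : ℝ)).sub ((hid.div_const 2).mul
    ((hasDerivAt_const x (5 : ℝ)).sub (hid.const_mul 3)))).div (hid.add_const (k : ℝ))
    (by positivity)
  have h2 := (hid.mul ((hasDerivAt_const x (1 : ℝ)).sub (hid.const_mul 6))).div
    ((hid.const_mul 2).add_const (k : ℝ)) (by positivity)
  have h3 := (((hid.const_mul 3).div_const 2).mul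
    ((hasDerivAt_const x (1 : ℝ)).add (hid.const_mul 3))).div
    ((hid.const_mul 3).add_const (k : ℝ)) (by positivity)
  refine ((h1.add h2).add h3).congr_deriv ?_
  simp only [Pi.add_apply, Pi.sub_apply, Pi.mul_apply, id]
  field_simp
  ring

lemma strictAntiOn_g3Term (k : ℕ) : StrictAntiOn (g3Term k) (Ioi 0) := by
  refine strictAntiOn_of_deriv_neg (convex_Ioi 0)
    (fun x hx => (hasDerivAt_g3Term k hx).continuousAt.continuousWithinAt) fun x hx => ?_
  rw [interior_Ioi, Set.mem_Ioi] at hx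
  rw [(hasDerivAt_g3Term k hx).deriv, neg_div, neg_lt_zero]
  positivity

lemma tendsto_g3 {x : ℝ} (hx : 0 < x) :
    Tendsto (fun n : ℕ => 1 / 2 - eulerMascheroniConstant - log (n + 1)
      + ∑ k ∈ range n, g3Term (k + 1) x) atTop (𝓝 (g3 x)) := by
  have hlim := ((((tendsto_log_sub_sum_digamma hx).const_mul (x / 2 * (5 - 3 * x) - 1)).sub
    ((tendsto_log_sub_sum_digamma (by positivity : 0 < 2 * x)).const_mul (x * (1 - 6 * x)))).sub
    ((tendsto_log_sub_sum_digamma (by positivity : 0 < 3 * x)).const_mul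
      (3 * x / 2 * (1 + 3 * x)))).const_add (2 - eulerMascheroniConstant - x⁻¹)
  rw [← tendsto_add_atTop_iff_nat 1] at hlim
  convert hlim using 1
  · ext n
    have hsum := sum_range_succ' (fun k => g3Term k x) n
    rw [sum_g3Term, g3Term_zero hx.ne'] at hsum
    push_cast
    linear_combination -hsum
  · rw [g3, digamma_add_one hx]
    congr 1
    ring

theorem g3_strictAntiOn_Ioi : StrictAntiOn g3 (Ioi 0) :=
  strictAntiOn_of_tendsto_add_sum (fun k => strictAntiOn_g3Term (k + 1)) fun _ hx => tendsto_g3 hx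

theorem g3_strictAntiOn : StrictAntiOn g3 (Set.Ioo (0 : ℝ) 1) :=
  g3_strictAntiOn_Ioi.mono Ioo_subset_Ioi_self
end
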